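/- arXiv:2008.07289 — 2 statements merged into one kernel-verified Lean document; each statement's English description precedes it below -/
import Mathlib

section
/- Let N ≥ 1 be an integer, C ≥ 1, set c̃ := 2C + 2, and let ϑ > 0. Let Λ_1, …, Λ_N ∈ ℂ, let L ⊆ {1,…,N} be nonempty, and let j ∈ L. Assume |Λ_i − Λ_j| ≤ c̃·ϑ for every i ∈ L and |Λ_i − Λ_j| ≥ (2c̃ + 2)·ϑ for every i ∉ L. Let G be a holomorphic function on an open set containing the closed disc {λ : |λ−Λ_j| ≤ 2c̃·ϑ}, with |G(λ)| ≤ C·ϑ^N there. Then the function f(λ) = ∏_{i=1}^{N} (λ − Λ_i) + G(λ) has exactly #L zeros, counted with multiplicity, in the open disc {λ : |λ−Λ_j| < 2c̃·ϑ}, where #L is the number of elements of L. -/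
open Metric Set Filter Complex

open scoped Real Topology

namespace Stmt6Aux

lemma mprod_differentiable (zs : Multiset ℂ) :
    Differentiable ℂ (fun z => (zs.map (fun w => z - w)).prod) := by
  induction zs using Multiset.induction_on with
  | empty => simpa using differentiable_const (1 : ℂ)
  | cons a s ih =>
      simp only [Multiset.map_cons, Multiset.prod_cons]
      exact (differentiable_id.sub_const a).mul ih

lemma fprod_differentiable (T : Finset ℂ) (m : ℂ → ℕ) :
    Differentiable ℂ (fun z => ∏ w ∈ T, (z - w) ^ (m w)) := by
  classical
  induction T using Finset.induction_on with
  | empty => simpa using differentiable_const (1 : ℂ)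
  | insert a T' hnot ih =>
      simp only [Finset.prod_insert hnot]
      exact ((differentiable_id.sub_const a).pow _).mul ih

lemma circleIntegral_add {f g : ℂ → ℂ} {c : ℂ} {R : ℝ} (hf : CircleIntegrable f c R)
    (hg : CircleIntegrable g c R) :
    (∮ z in C(c, R), (f z + g z)) = (∮ z in C(c, R), f z) + ∮ z in C(c, R), g z := by
  simp only [circleIntegral, smul_add, intervalIntegral.integral_add hf.out hg.out]

/-- Cauchy–Goursat for the logarithmic derivative of a nonvanishing holomorphic function. -/
lemma logderiv_integral_zero {W : Set ℂ} (hW : IsOpen W) {c : ℂ} {r : ℝ} (hr : 0 < r)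
    (hWb : closedBall c r ⊆ W) {g : ℂ → ℂ} (hg : DifferentiableOn ℂ g W)
    (hgne : ∀ z ∈ closedBall c r, g z ≠ 0) :
    (∮ z in C(c, r), deriv g z / g z) = 0 := by
  have hganl : AnalyticOnNhd ℂ g W := hg.analyticOnNhd hW
  have hdg : DifferentiableOn ℂ (deriv g) W := hganl.deriv.differentiableOn
  apply Complex.circleIntegral_eq_zero_of_differentiable_on_off_countable hr.le
    Set.countable_empty
  · exact (hdg.continuousOn.mono hWb).div (hg.continuousOn.mono hWb) hgne
  · intro z hz
    have hz1 : z ∈ closedBall c r := ball_subset_closedBall hz.1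
    have hzW : z ∈ W := hWb hz1
    exact (hdg.differentiableAt (hW.mem_nhds hzW)).div
      (hg.differentiableAt (hW.mem_nhds hzW)) (hgne z hz1)

/-- Argument principle for an explicitly factored function. -/
lemma argument_principle {W : Set ℂ} (hW : IsOpen W) {c : ℂ} {r : ℝ} (hr : 0 < r)
    (hWb : closedBall c r ⊆ W) {g : ℂ → ℂ} (hg : DifferentiableOn ℂ g W)
    (hgne : ∀ z ∈ closedBall c r, g z ≠ 0) :
    ∀ zs : Multiset ℂ, (∀ w ∈ zs, w ∈ ball c r) →
      (∮ z in C(c, r),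
        deriv (fun y => (zs.map (fun w => y - w)).prod * g y) z /
          ((zs.map (fun w => z - w)).prod * g z)) = 2 * π * I * (Multiset.card zs) := by
  intro zs
  induction zs using Multiset.induction_on with
  | empty =>
      intro _
      simp only [Multiset.map_zero, Multiset.prod_zero, one_mul]
      rw [logderiv_integral_zero hW hr hWb hg hgne]
      simp
  | cons a s ih =>
      intro hmem
      have ha : a ∈ ball c r := hmem a (Multiset.mem_cons_self a s)
      have hmem' : ∀ w ∈ s, w ∈ ball c r := fun w hw => hmem w (Multiset.mem_cons_of_mem hw)
      have hsphsub : sphere c r ⊆ W := fun z hz => hWb (sphere_subset_closedBall hz)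
      have hF₁diffOn : DifferentiableOn ℂ (fun y => (s.map (fun w => y - w)).prod * g y) W :=
        ((mprod_differentiable s).differentiableOn).mul hg
      have hderivF₁cont : ContinuousOn (deriv (fun y => (s.map (fun w => y - w)).prod * g y)) W :=
        ((hF₁diffOn.analyticOnNhd hW).deriv).differentiableOn.continuousOn
      have hF₁ne : ∀ z ∈ sphere c r, (s.map (fun w => z - w)).prod * g z ≠ 0 := by
        intro z hz
        have hzc : z ∈ closedBall c r := sphere_subset_closedBall hz
        refine mul_ne_zero (Multiset.prod_ne_zero ?_) (hgne z hzc)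
        intro h0
        obtain ⟨w, hw, hzw⟩ := Multiset.mem_map.1 h0
        have hzw' : z = w := sub_eq_zero.1 hzw
        rw [mem_sphere] at hz
        rw [hzw'] at hz
        exact absurd (hmem' w hw) (by rw [mem_ball, hz]; exact lt_irrefl r)
      have hEq : Set.EqOn
          (fun z => deriv (fun y => ((a ::ₘ s).map (fun w => y - w)).prod * g y) z /
            (((a ::ₘ s).map (fun w => z - w)).prod * g z))
          (fun z => (z - a)⁻¹ +
            deriv (fun y => (s.map (fun w => y - w)).prod * g y) z /
              ((s.map (fun w => z - w)).prod * g z)) (sphere c r) := by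
        intro z hz
        have hzc : z ∈ closedBall c r := sphere_subset_closedBall hz
        have hzW : z ∈ W := hWb hzc
        have hd1 : DifferentiableAt ℂ (fun y : ℂ => y - a) z :=
          (differentiable_id.sub_const a) z
        have hd2 : DifferentiableAt ℂ (fun y => (s.map (fun w => y - w)).prod * g y) z :=
          hF₁diffOn.differentiableAt (hW.mem_nhds hzW)
        have hza : z - a ≠ 0 := by
          rw [sub_ne_zero]
          intro hzeq
          rw [mem_sphere] at hz
          rw [hzeq] at hz
          exact absurd ha (by rw [mem_ball, hz]; exact lt_irrefl r)
        have hF₁z : (s.map (fun w => z - w)).prod * g z ≠ 0 := hF₁ne z hz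
        have hfun : (fun y => ((a ::ₘ s).map (fun w => y - w)).prod * g y)
            = fun y => (y - a) * ((s.map (fun w => y - w)).prod * g y) := by
          funext y
          simp only [Multiset.map_cons, Multiset.prod_cons, mul_assoc]
        simp only [hfun, Multiset.map_cons, Multiset.prod_cons, mul_assoc]
        rw [deriv_fun_mul hd1 hd2, deriv_sub_const, deriv_id'']
        rw [inv_eq_one_div, div_add_div _ _ hza hF₁z]
      rw [circleIntegral.integral_congr hr.le hEq]
      have hint1 : CircleIntegrable (fun z => (z - a)⁻¹) c r :=
        circleIntegrable_sub_inv_iff.2 (Or.inr (fun hsph => by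
          rw [mem_sphere, abs_of_pos hr] at hsph
          exact absurd ha (by rw [mem_ball, hsph]; exact lt_irrefl r)))
      have hint2 : CircleIntegrable
          (fun z => deriv (fun y => (s.map (fun w => y - w)).prod * g y) z /
            ((s.map (fun w => z - w)).prod * g z)) c r := by
        apply ContinuousOn.circleIntegrable hr.le
        exact (hderivF₁cont.mono hsphsub).div
          (hF₁diffOn.continuousOn.mono hsphsub) hF₁ne
      rw [circleIntegral_add hint1 hint2]
      rw [circleIntegral.integral_sub_inv_of_mem_ball ha]
      rw [ih hmem']
      simp only [Multiset.card_cons]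
      push_cast
      ring

/-- Factorization of a holomorphic function by its zeros in a closed disc. -/
lemma zeros_factorization {c : ℂ} {R R₂ : ℝ} (hR : 0 < R) (hRR₂ : R < R₂) {f : ℂ → ℂ}
    (hf : DifferentiableOn ℂ f (ball c R₂))
    (hsph : ∀ z ∈ sphere c R, f z ≠ 0) :
    ∃ zs : Multiset ℂ, (∀ w ∈ zs, w ∈ ball c R ∧ f w = 0) ∧
      ∃ g : ℂ → ℂ, DifferentiableOn ℂ g (ball c R₂) ∧
        (∀ z ∈ closedBall c R, g z ≠ 0) ∧
        ∀ z ∈ ball c R₂, f z = ((zs.map (fun w => z - w)).prod) * g z := by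
  classical
  have hV : IsOpen (ball c R₂) := isOpen_ball
  have hpre : IsPreconnected (ball c R₂) := (convex_ball c R₂).isPreconnected
  have hanl : AnalyticOnNhd ℂ f (ball c R₂) := hf.analyticOnNhd hV
  have hcbsub : closedBall c R ⊆ ball c R₂ := closedBall_subset_ball hRR₂
  have hz₁s : (c + R) ∈ sphere c R := by
    simp [mem_sphere, Complex.dist_eq, Complex.norm_real, abs_of_pos hR]
  have hz₁ : f (c + R) ≠ 0 := hsph _ hz₁s
  have hz₁V : (c + R) ∈ ball c R₂ := hcbsub (sphere_subset_closedBall hz₁s)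
  have hnotall : ∀ w ∈ ball c R₂, ¬ (∀ᶠ z in 𝓝 w, f z = 0) := by
    intro w hw hev
    have hfreq : ∃ᶠ z in 𝓝[≠] w, f z = 0 := (hev.filter_mono nhdsWithin_le_nhds).frequently
    exact hz₁ (hanl.eqOn_zero_of_preconnected_of_frequently_eq_zero hpre hw hfreq hz₁V)
  set S : Set ℂ := {z | z ∈ closedBall c R ∧ f z = 0} with hSdef
  have hSsub : S ⊆ closedBall c R := fun z hz => hz.1
  have hSfin : S.Finite := by
    have hScl : IsClosed S := by
      have hSeq : S = closedBall c R ∩ f ⁻¹' {0} := by ext z; simp [hSdef]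
      rw [hSeq]
      exact (hf.continuousOn.mono hcbsub).preimage_isClosed_of_isClosed
        Metric.isClosed_closedBall isClosed_singleton
    have hScomp : IsCompact S := (isCompact_closedBall c R).of_isClosed_subset hScl hSsub
    have key : ∀ x : ℂ, ∃ Ux : Set ℂ, Ux ∈ 𝓝 x ∧ (x ∈ S → ∀ y ∈ Ux, y ∈ S → y = x) := by
      intro x
      by_cases hx : x ∈ S
      · have hxV : x ∈ ball c R₂ := hcbsub hx.1
        rcases (hanl x hxV).eventually_eq_zero_or_eventually_ne_zero with h | h
        · exact absurd h (hnotall x hxV)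
        · rw [eventually_nhdsWithin_iff] at h
          obtain ⟨Ux, hUx, hprop⟩ := eventually_iff_exists_mem.1 h
          refine ⟨Ux, hUx, fun _ y hy hyS => ?_⟩
          by_contra hne
          exact (hprop y hy (by simpa using hne)) hyS.2
      · exact ⟨univ, univ_mem, fun h => absurd h hx⟩
    choose Ux hUx hUxp using key
    obtain ⟨t, htS, hcov⟩ := hScomp.elim_nhds_subcover Ux (fun x _ => hUx x)
    refine Set.Finite.subset t.finite_toSet ?_
    intro y hy
    have := hcov hy
    simp only [Set.mem_iUnion] at this
    obtain ⟨x, hxt, hyUx⟩ := this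
    have hyx : y = x := hUxp x (htS x hxt) y hyUx hy
    rw [hyx]
    exact hxt
  set Z : Finset ℂ := hSfin.toFinset with hZdef
  have hZS : ∀ w, w ∈ Z ↔ w ∈ S := fun w => hSfin.mem_toFinset
  have hkey : ∀ w : ℂ, ∃ (m : ℕ) (ψ : ℂ → ℂ), w ∈ Z →
      (1 ≤ m ∧ AnalyticAt ℂ ψ w ∧ ψ w ≠ 0 ∧
        ∀ᶠ z in 𝓝 w, f z = (z - w) ^ m * ψ z) := by
    intro w
    by_cases hw : w ∈ Z
    · have hwS : w ∈ S := (hZS w).1 hw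
      have hwV : w ∈ ball c R₂ := hcbsub hwS.1
      have ha : AnalyticAt ℂ f w := hanl w hwV
      have hord : analyticOrderAt f w ≠ ⊤ := by
        rw [Ne, analyticOrderAt_eq_top]
        exact hnotall w hwV
      obtain ⟨m, hm⟩ := WithTop.ne_top_iff_exists.1 hord
      obtain ⟨ψ, hψa, hψw, hev⟩ := (ha.analyticOrderAt_eq_natCast).1 hm.symm
      have hev' : ∀ᶠ z in 𝓝 w, f z = (z - w) ^ m * ψ z := by
        filter_upwards [hev] with z hz using by simpa [smul_eq_mul] using hz
      have hm1 : 1 ≤ m := by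
        rcases Nat.eq_zero_or_pos m with h0 | h1
        · exfalso
          have hfw := hev'.self_of_nhds
          rw [h0, pow_zero, one_mul, hwS.2] at hfw
          exact hψw hfw.symm
        · exact h1
      exact ⟨m, ψ, fun _ => ⟨hm1, hψa, hψw, hev'⟩⟩
    · exact ⟨1, 0, fun h => absurd h hw⟩
  choose n φ hkey using hkey
  set p : ℂ → ℂ := fun z => ∏ w ∈ Z, (z - w) ^ (n w) with hpdef
  have hpdiff : Differentiable ℂ p := by rw [hpdef]; exact fprod_differentiable Z n
  set zs : Multiset ℂ := Z.val.bind (fun w => Multiset.replicate (n w) w) with hzsdef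
  have hmem_zs : ∀ x, x ∈ zs ↔ x ∈ Z := by
    intro x
    constructor
    · intro hx
      obtain ⟨a, haZ, hx⟩ := Multiset.mem_bind.1 hx
      rw [Multiset.eq_of_mem_replicate hx]
      exact haZ
    · intro hx
      refine Multiset.mem_bind.2 ⟨x, hx, Multiset.mem_replicate.2 ⟨?_, rfl⟩⟩
      exact Nat.one_le_iff_ne_zero.1 (hkey x hx).1
  have hprodzs : ∀ z, (zs.map (fun w => z - w)).prod = p z := by
    intro z
    rw [hzsdef, Multiset.map_bind, Multiset.prod_bind]
    simp only [Multiset.map_replicate, Multiset.prod_replicate, hpdef]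
    exact (Finset.prod_eq_multiset_prod _ _).symm
  set g : ℂ → ℂ := fun z => if z ∈ Z then limUnder (𝓝[≠] z) (fun y => f y / p y)
    else f z / p z with hgdef
  have hloc : ∀ w ∈ Z, ∃ ψ : ℂ → ℂ, DifferentiableAt ℂ ψ w ∧ ψ w ≠ 0 ∧ g =ᶠ[𝓝 w] ψ := by
    intro w hw
    obtain ⟨hn1, hφa, hφw, hev⟩ := hkey w hw
    set D : ℂ → ℂ := fun z => ∏ w' ∈ Z.erase w, (z - w') ^ (n w') with hDdef
    have hDdiff : Differentiable ℂ D := by rw [hDdef]; exact fprod_differentiable _ _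
    have hDw : D w ≠ 0 := by
      rw [hDdef]
      refine Finset.prod_ne_zero_iff.2 (fun w' hw' => pow_ne_zero _ (sub_ne_zero.2 ?_))
      exact fun h => (Finset.ne_of_mem_erase hw') h.symm
    refine ⟨fun z => φ w z / D z, (hφa.differentiableAt).div (hDdiff w) hDw,
      div_ne_zero hφw hDw, ?_⟩
    have hcomp : ∀ y, y ≠ w → (∀ w' ∈ Z.erase w, y ≠ w') →
        f y = (y - w) ^ (n w) * φ w y → f y / p y = φ w y / D y := by
      intro y hyw hyZ hfy
      have hpy : p y = (y - w) ^ (n w) * D y := by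
        rw [hpdef, hDdef]
        simp only
        rw [← Finset.mul_prod_erase Z _ hw]
      have hDy : D y ≠ 0 := by
        rw [hDdef]
        exact Finset.prod_ne_zero_iff.2
          (fun w' hw' => pow_ne_zero _ (sub_ne_zero.2 (hyZ w' hw')))
      have hyw' : ((y - w) ^ (n w) : ℂ) ≠ 0 := pow_ne_zero _ (sub_ne_zero.2 hyw)
      rw [hfy, hpy, mul_div_mul_left _ _ hyw']
    have hclosed : IsClosed (↑(Z.erase w) : Set ℂ) := (Z.erase w).finite_toSet.isClosed
    have hev2 : ∀ᶠ z in 𝓝 w, z ∉ (↑(Z.erase w) : Set ℂ) :=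
      hclosed.isOpen_compl.mem_nhds (by simp)
    filter_upwards [hev, hev2] with z hz1 hz2
    by_cases hzw : z = w
    · subst hzw
      have hgz : g z = limUnder (𝓝[≠] z) (fun y => f y / p y) := by
        rw [hgdef]; simp only [if_pos hw]
      rw [hgz]
      have hcont : Tendsto (fun y => φ z y / D y) (𝓝[≠] z) (𝓝 (φ z z / D z)) :=
        (((hφa.differentiableAt).div (hDdiff z) hDw).continuousAt.tendsto).mono_left
          nhdsWithin_le_nhds
      have heq2 : (fun y => φ z y / D y) =ᶠ[𝓝[≠] z] (fun y => f y / p y) := by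
        filter_upwards [hev.filter_mono nhdsWithin_le_nhds,
          hev2.filter_mono nhdsWithin_le_nhds, self_mem_nhdsWithin] with y hy1 hy2 hy3
        exact (hcomp y hy3 (fun w' hw' h => hy2 (h ▸ Finset.mem_coe.2 hw')) hy1).symm
      exact (hcont.congr' heq2).limUnder_eq
    · have hzZ : z ∉ Z := by
        intro hzZ2
        exact hz2 (Finset.mem_coe.2 (Finset.mem_erase.2 ⟨hzw, hzZ2⟩))
      have hgz : g z = f z / p z := by rw [hgdef]; simp only [if_neg hzZ]
      rw [hgz]
      exact hcomp z hzw (fun w' hw' h => hz2 (h ▸ Finset.mem_coe.2 hw')) hz1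
  have hgZ : ∀ w ∈ Z, g w ≠ 0 ∧ DifferentiableAt ℂ g w := by
    intro w hw
    obtain ⟨ψ, hψd, hψw, hEq⟩ := hloc w hw
    refine ⟨?_, hEq.differentiableAt_iff.2 hψd⟩
    rw [hEq.eq_of_nhds]
    exact hψw
  have hpne : ∀ z, z ∉ Z → p z ≠ 0 := by
    intro z hz
    rw [hpdef]
    exact Finset.prod_ne_zero_iff.2 (fun w' hw' =>
      pow_ne_zero _ (sub_ne_zero.2 (fun h => hz (h ▸ hw'))))
  have hgoff : ∀ z, z ∉ Z → g z = f z / p z := by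
    intro z hz
    rw [hgdef]; simp only [if_neg hz]
  have hgdiff : DifferentiableOn ℂ g (ball c R₂) := by
    intro z hz
    by_cases hzZ : z ∈ Z
    · exact ((hgZ z hzZ).2).differentiableWithinAt
    · have hev : ∀ᶠ y in 𝓝 z, y ∉ (↑Z : Set ℂ) :=
        (Z.finite_toSet.isClosed).isOpen_compl.mem_nhds (by simpa using hzZ)
      have hEq : g =ᶠ[𝓝 z] fun y => f y / p y := by
        filter_upwards [hev] with y hy
        exact hgoff y (fun h => hy (Finset.mem_coe.2 h))
      have hfp : DifferentiableAt ℂ (fun y => f y / p y) z :=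
        (hf.differentiableAt (hV.mem_nhds hz)).div (hpdiff z) (hpne z hzZ)
      exact (hEq.differentiableAt_iff.2 hfp).differentiableWithinAt
  have hgne : ∀ z ∈ closedBall c R, g z ≠ 0 := by
    intro z hz
    by_cases hzZ : z ∈ Z
    · exact (hgZ z hzZ).1
    · have hfz : f z ≠ 0 := by
        intro hfz0
        exact hzZ ((hZS z).2 ⟨hz, hfz0⟩)
      rw [hgoff z hzZ]
      exact div_ne_zero hfz (hpne z hzZ)
  have hfact : ∀ z ∈ ball c R₂, f z = p z * g z := by
    intro z hz
    by_cases hzZ : z ∈ Z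
    · have hfz : f z = 0 := ((hZS z).1 hzZ).2
      have hpz : p z = 0 := by
        rw [hpdef]
        refine Finset.prod_eq_zero hzZ ?_
        rw [sub_self]
        exact zero_pow (Nat.one_le_iff_ne_zero.1 (hkey z hzZ).1)
      rw [hfz, hpz, zero_mul]
    · rw [hgoff z hzZ, mul_div_cancel₀ _ (hpne z hzZ)]
  refine ⟨zs, ?_, g, hgdiff, hgne, ?_⟩
  · intro w hw
    have hwZ : w ∈ Z := (hmem_zs w).1 hw
    have hwS : w ∈ S := (hZS w).1 hwZ
    refine ⟨?_, hwS.2⟩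
    rw [mem_ball]
    rcases lt_or_eq_of_le (mem_closedBall.1 hwS.1) with h | h
    · exact h
    · exact absurd hwS.2 (hsph w (by rw [mem_sphere]; exact h))
  · intro z hz
    rw [hprodzs z]
    exact hfact z hz

end Stmt6Aux

open Stmt6Aux

set_option maxHeartbeats 2000000 in
/-- Cluster counting (Section 5.3): with `c̃ := 2C + 2`, if the eigenvalues in the
group `L` are within `c̃*ϑ` of `Λ j` while those outside are at distance at least
`(2c̃+2)*ϑ`, and `G` is holomorphic on an open set containing the closed disc of
radius `2c̃*ϑ` about `Λ j` with `|G| ≤ C*ϑ^N` there, then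
`f z = ∏_i (z - Λ i) + G z` has exactly `#L` zeros counted with multiplicity in
the open disc of radius `2c̃*ϑ` about `Λ j`. -/
theorem stmt_6 (N : ℕ) (hN : 1 ≤ N) (C : ℝ) (hC : 1 ≤ C) (ϑ : ℝ) (hϑ : 0 < ϑ)
    (Λ : Fin N → ℂ) (L : Finset (Fin N)) (hL : L.Nonempty) (j : Fin N) (hj : j ∈ L)
    (hin : ∀ i ∈ L, ‖Λ i - Λ j‖ ≤ (2 * C + 2) * ϑ)
    (hout : ∀ i ∉ L, (2 * (2 * C + 2) + 2) * ϑ ≤ ‖Λ i - Λ j‖)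
    (U : Set ℂ) (hU : IsOpen U)
    (hUball : Metric.closedBall (Λ j) (2 * (2 * C + 2) * ϑ) ⊆ U)
    (G : ℂ → ℂ) (hG : DifferentiableOn ℂ G U)
    (hGbound : ∀ z ∈ Metric.closedBall (Λ j) (2 * (2 * C + 2) * ϑ),
      ‖G z‖ ≤ C * ϑ ^ N) :
    ∃ zs : Multiset ℂ,
      Multiset.card zs = L.card ∧
      (∀ z ∈ zs, z ∈ Metric.ball (Λ j) (2 * (2 * C + 2) * ϑ)) ∧
      ∃ g : ℂ → ℂ, DifferentiableOn ℂ g (Metric.ball (Λ j) (2 * (2 * C + 2) * ϑ)) ∧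
        (∀ z ∈ Metric.ball (Λ j) (2 * (2 * C + 2) * ϑ), g z ≠ 0) ∧
        ∀ z ∈ Metric.ball (Λ j) (2 * (2 * C + 2) * ϑ),
          (∏ i, (z - Λ i)) + G z = (zs.map (fun w => z - w)).prod * g z := by
  classical
  set R : ℝ := 2 * (2 * C + 2) * ϑ with hRdef
  have hR : 0 < R := by rw [hRdef]; nlinarith
  set r : ℝ := R - ϑ with hrdef
  have hrpos : 0 < r := by rw [hrdef, hRdef]; nlinarith
  have hrR : r < R := by rw [hrdef]; linarith
  set P : ℂ → ℂ := fun z => ∏ i, (z - Λ i) with hPdef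
  have hPmult : P = fun z => ((Finset.univ.val.map Λ).map (fun w => z - w)).prod := by
    funext z
    rw [hPdef]
    simp only
    rw [Finset.prod_eq_multiset_prod, Multiset.map_map]
    rfl
  have hPdiff : Differentiable ℂ P := by
    rw [hPmult]; exact mprod_differentiable _
  have hPlow : ∀ z : ℂ, r ≤ dist z (Λ j) → dist z (Λ j) ≤ R →
      (2 * C + 1) * ϑ ^ N ≤ ‖P z‖ := by
    intro z h1 h2
    have habs : ‖P z‖ = ∏ i, ‖z - Λ i‖ := by
      rw [hPdef]; exact norm_prod _ _
    rw [habs]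
    have hfac : ∀ i : Fin N, (if i = j then (2 * C + 1) * ϑ else ϑ) ≤ ‖z - Λ i‖ := by
      intro i
      by_cases hij : i = j
      · rw [if_pos hij, hij]
        have hd : ‖z - Λ j‖ = dist z (Λ j) := (Complex.dist_eq z (Λ j)).symm
        rw [hd]
        have : (2 * C + 1) * ϑ ≤ r := by rw [hrdef, hRdef]; nlinarith
        linarith
      · simp only [if_neg hij]
        have hd : dist z (Λ j) = ‖z - Λ j‖ := Complex.dist_eq z (Λ j)
        by_cases hiL : i ∈ L
        · have htri : ‖z - Λ j‖ ≤ ‖z - Λ i‖ + ‖Λ i - Λ j‖ := by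
            calc ‖z - Λ j‖ = ‖(z - Λ i) + (Λ i - Λ j)‖ := by ring_nf
            _ ≤ _ := norm_add_le _ _
          have h3 := hin i hiL
          have h4 : r ≤ ‖z - Λ j‖ := by rw [← hd]; exact h1
          nlinarith [hrdef, hRdef]
        · have h3 := hout i hiL
          have htri : ‖Λ i - Λ j‖ ≤ ‖z - Λ i‖ + ‖z - Λ j‖ := by
            calc ‖Λ i - Λ j‖ = ‖(Λ i - z) + (z - Λ j)‖ := by ring_nf
            _ ≤ ‖Λ i - z‖ + ‖z - Λ j‖ := norm_add_le _ _
            _ = ‖z - Λ i‖ + ‖z - Λ j‖ := by rw [norm_sub_rev (Λ i) z]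
          have h4 : ‖z - Λ j‖ ≤ R := by rw [← hd]; exact h2
          nlinarith [hRdef]
    have hprodge : ∏ i, (if i = j then (2 * C + 1) * ϑ else ϑ) ≤ ∏ i, ‖z - Λ i‖ := by
      apply Finset.prod_le_prod
      · intro i _
        by_cases hij : i = j
        · simp only [if_pos hij]; nlinarith
        · simp only [if_neg hij]; linarith
      · intro i _
        exact hfac i
    have hprodeq : ∏ i, (if i = j then (2 * C + 1) * ϑ else ϑ) = (2 * C + 1) * ϑ ^ N := by
      rw [← Finset.mul_prod_erase Finset.univ _ (Finset.mem_univ j)]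
      rw [if_pos rfl]
      have hrest : ∏ i ∈ Finset.univ.erase j, (if i = j then (2 * C + 1) * ϑ else ϑ)
          = ϑ ^ (N - 1) := by
        rw [Finset.prod_congr rfl (fun i hi => if_neg (Finset.ne_of_mem_erase hi))]
        rw [Finset.prod_const, Finset.card_erase_of_mem (Finset.mem_univ j)]
        rw [Finset.card_univ, Fintype.card_fin]
      rw [hrest]
      have hNs : N - 1 + 1 = N := Nat.succ_pred_eq_of_pos hN
      calc (2 * C + 1) * ϑ * ϑ ^ (N - 1) = (2 * C + 1) * ϑ ^ (N - 1 + 1) := by ring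
      _ = (2 * C + 1) * ϑ ^ N := by rw [hNs]
    linarith [hprodge, hprodeq.le]
  have hϑN : 0 < ϑ ^ N := pow_pos hϑ N
  have hFlow : ∀ t : ℝ, t ∈ Set.Icc (0:ℝ) 1 → ∀ z : ℂ, r ≤ dist z (Λ j) → dist z (Λ j) ≤ R →
      (C + 1) * ϑ ^ N ≤ ‖P z + (t:ℂ) * G z‖ := by
    intro t ht z h1 h2
    have hzU : z ∈ closedBall (Λ j) R := mem_closedBall.2 h2
    have hGz := hGbound z hzU
    have h3 := hPlow z h1 h2
    have h4 : ‖(t:ℂ) * G z‖ ≤ C * ϑ ^ N := by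
      rw [norm_mul, Complex.norm_real, Real.norm_eq_abs, _root_.abs_of_nonneg ht.1]
      nlinarith [norm_nonneg (G z), ht.2, ht.1]
    have h5 : ‖P z‖ ≤ ‖P z + (t:ℂ) * G z‖ + ‖(t:ℂ) * G z‖ := by
      calc ‖P z‖ = ‖(P z + (t:ℂ) * G z) + (-((t:ℂ) * G z))‖ := by ring_nf
      _ ≤ ‖P z + (t:ℂ) * G z‖ + ‖-((t:ℂ) * G z)‖ := norm_add_le _ _
      _ = ‖P z + (t:ℂ) * G z‖ + ‖(t:ℂ) * G z‖ := by rw [norm_neg]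
    nlinarith
  have hann : ∀ t : ℝ, t ∈ Set.Icc (0:ℝ) 1 → ∀ z : ℂ, r ≤ dist z (Λ j) → dist z (Λ j) ≤ R →
      P z + (t:ℂ) * G z ≠ 0 := by
    intro t ht z h1 h2 h0
    have := hFlow t ht z h1 h2
    rw [h0] at this
    simp only [norm_zero] at this
    nlinarith
  obtain ⟨δ, hδpos, hδsub⟩ := (isCompact_closedBall (Λ j) R).exists_thickening_subset_open hU hUball
  set R₂ : ℝ := δ + R with hR₂def
  have hRR₂ : R < R₂ := by rw [hR₂def]; linarith
  have hVsub : ball (Λ j) R₂ ⊆ U := by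
    rw [hR₂def, ← thickening_closedBall hδpos hR.le (Λ j)]
    exact hδsub
  have hV : IsOpen (ball (Λ j) R₂) := isOpen_ball
  have hGV : DifferentiableOn ℂ G (ball (Λ j) R₂) := hG.mono hVsub
  have hdiff : ∀ t : ℝ, DifferentiableOn ℂ (fun z => P z + (t:ℂ) * G z) (ball (Λ j) R₂) := by
    intro t
    exact (hPdiff.differentiableOn).add (hGV.const_mul _)
  have hcbr : closedBall (Λ j) r ⊆ ball (Λ j) R₂ := closedBall_subset_ball (hrR.trans hRR₂)
  have hsphsubV : sphere (Λ j) r ⊆ ball (Λ j) R₂ := fun z hz => hcbr (sphere_subset_closedBall hz)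
  set Φ : ℝ → ℂ := fun t =>
    ∮ z in C(Λ j, r), (deriv P z + (t:ℂ) * deriv G z) / (P z + (t:ℂ) * G z) with hΦdef
  have hderiv_t : ∀ t : ℝ, ∀ z ∈ ball (Λ j) R₂,
      deriv (fun y => P y + (t:ℂ) * G y) z = deriv P z + (t:ℂ) * deriv G z := by
    intro t z hz
    have hGat : DifferentiableAt ℂ G z := hGV.differentiableAt (hV.mem_nhds hz)
    rw [deriv_fun_add (hPdiff z) (hGat.const_mul _), deriv_const_mul _ hGat]
  have hcount : ∀ t : ℝ, t ∈ Set.Icc (0:ℝ) 1 → ∃ (zs : Multiset ℂ) (g : ℂ → ℂ),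
      (∀ w ∈ zs, w ∈ ball (Λ j) R ∧ P w + (t:ℂ) * G w = 0) ∧
      DifferentiableOn ℂ g (ball (Λ j) R₂) ∧ (∀ z ∈ closedBall (Λ j) R, g z ≠ 0) ∧
      (∀ z ∈ ball (Λ j) R₂, P z + (t:ℂ) * G z = (zs.map (fun w => z - w)).prod * g z) ∧
      Φ t = 2 * π * Complex.I * (Multiset.card zs : ℂ) := by
    intro t ht
    have hsph : ∀ z ∈ sphere (Λ j) R, P z + (t:ℂ) * G z ≠ 0 := by
      intro z hz
      rw [mem_sphere] at hz
      exact hann t ht z (by rw [hz]; exact hrR.le) (by rw [hz])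
    obtain ⟨zs, hzs, g, hgdiff, hgne, hfact⟩ :=
      zeros_factorization hR hRR₂ (hdiff t) hsph
    have hzball : ∀ w ∈ zs, w ∈ ball (Λ j) r := by
      intro w hw
      obtain ⟨hwR, hw0⟩ := hzs w hw
      rw [mem_ball] at hwR ⊢
      by_contra hge
      push_neg at hge
      exact hann t ht w hge hwR.le hw0
    have hAP := argument_principle hV hrpos hcbr hgdiff
      (fun z hz => hgne z (closedBall_subset_closedBall hrR.le hz)) zs hzball
    refine ⟨zs, g, hzs, hgdiff, hgne, hfact, ?_⟩
    have hEqOn : Set.EqOn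
        (fun z => (deriv P z + (t:ℂ) * deriv G z) / (P z + (t:ℂ) * G z))
        (fun z => deriv (fun y => (zs.map (fun w => y - w)).prod * g y) z /
          ((zs.map (fun w => z - w)).prod * g z)) (sphere (Λ j) r) := by
      intro z hz
      have hzV : z ∈ ball (Λ j) R₂ := hsphsubV hz
      have hev : (fun y => (zs.map (fun w => y - w)).prod * g y)
          =ᶠ[𝓝 z] (fun y => P y + (t:ℂ) * G y) := by
        filter_upwards [hV.mem_nhds hzV] with y hy
        exact (hfact y hy).symm
      simp only
      rw [hev.deriv_eq, hderiv_t t z hzV, ← hfact z hzV]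
    rw [hΦdef]
    simp only
    rw [circleIntegral.integral_congr hrpos.le hEqOn]
    exact hAP
  have hΦ0 : Φ 0 = 2 * π * Complex.I * (L.card : ℂ) := by
    have hPsplit : P = fun z => ((L.val.map Λ).map (fun w => z - w)).prod *
        ((Lᶜ.val.map Λ).map (fun w => z - w)).prod := by
      funext z
      rw [hPdef]
      simp only
      rw [← Finset.prod_mul_prod_compl L (fun i => z - Λ i)]
      rw [Finset.prod_eq_multiset_prod, Finset.prod_eq_multiset_prod,
        Multiset.map_map, Multiset.map_map]
      rfl
    have hmemL : ∀ w ∈ L.val.map Λ, w ∈ ball (Λ j) r := by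
      intro w hw
      obtain ⟨i, hi, rfl⟩ := Multiset.mem_map.1 hw
      rw [mem_ball, Complex.dist_eq]
      have h3 := hin i hi
      rw [hrdef, hRdef]
      nlinarith
    have hgLne : ∀ z ∈ closedBall (Λ j) r, ((Lᶜ.val.map Λ).map (fun w => z - w)).prod ≠ 0 := by
      intro z hz
      apply Multiset.prod_ne_zero
      intro h0
      obtain ⟨w, hw, hzw⟩ := Multiset.mem_map.1 h0
      obtain ⟨i, hi, rfl⟩ := Multiset.mem_map.1 hw
      rw [Finset.mem_val, Finset.mem_compl] at hi
      have h3 := hout i hi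
      have hzi : z = Λ i := sub_eq_zero.1 hzw
      rw [mem_closedBall, hzi, Complex.dist_eq] at hz
      rw [hrdef, hRdef] at hz
      nlinarith
    have hAP := argument_principle hV hrpos hcbr
      ((mprod_differentiable (Lᶜ.val.map Λ)).differentiableOn) hgLne (L.val.map Λ) hmemL
    have hEqOn : Set.EqOn
        (fun z => (deriv P z + ((0:ℝ):ℂ) * deriv G z) / (P z + ((0:ℝ):ℂ) * G z))
        (fun z => deriv (fun y => ((L.val.map Λ).map (fun w => y - w)).prod *
            ((Lᶜ.val.map Λ).map (fun w => y - w)).prod) z /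
          (((L.val.map Λ).map (fun w => z - w)).prod *
            ((Lᶜ.val.map Λ).map (fun w => z - w)).prod)) (sphere (Λ j) r) := by
      intro z hz
      simp only [Complex.ofReal_zero, zero_mul, add_zero]
      have h1 : deriv (fun y => ((L.val.map Λ).map (fun w => y - w)).prod *
          ((Lᶜ.val.map Λ).map (fun w => y - w)).prod) z = deriv P z := by
        rw [hPsplit]
      have h2 : ((L.val.map Λ).map (fun w => z - w)).prod *
          ((Lᶜ.val.map Λ).map (fun w => z - w)).prod = P z := by
        rw [hPsplit]
      rw [h1, h2]
    rw [hΦdef]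
    simp only
    rw [circleIntegral.integral_congr hrpos.le hEqOn, hAP]
    congr 1
    rw [Multiset.card_map]
    rfl
  -- Lipschitz continuity of Φ on [0,1]
  have hsphU : sphere (Λ j) r ⊆ U := fun z hz => hVsub (hsphsubV hz)
  have hderivGcont : ContinuousOn (deriv G) (sphere (Λ j) r) :=
    (((hG.analyticOnNhd hU).deriv).differentiableOn.continuousOn).mono hsphU
  have hderivPcont : Continuous (deriv P) := by
    have : AnalyticOnNhd ℂ P Set.univ := hPdiff.differentiableOn.analyticOnNhd isOpen_univ
    exact continuousOn_univ.1 this.deriv.differentiableOn.continuousOn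
  have hGcont : ContinuousOn G (sphere (Λ j) r) := (hG.continuousOn).mono hsphU
  obtain ⟨M, hM0, hM⟩ : ∃ M : ℝ, 0 ≤ M ∧ ∀ z ∈ sphere (Λ j) r,
      ‖deriv G z * P z - deriv P z * G z‖ ≤ M := by
    obtain ⟨M, hM⟩ := (isCompact_sphere (Λ j) r).exists_bound_of_continuousOn
      ((hderivGcont.mul (hPdiff.continuous.continuousOn)).sub
        ((hderivPcont.continuousOn).mul hGcont))
    refine ⟨max M 0, le_max_right _ _, fun z hz => ?_⟩
    have := hM z hz
    exact this.trans (le_max_left _ _)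
  set ε : ℝ := (C + 1) * ϑ ^ N with hεdef
  have hεpos : 0 < ε := by rw [hεdef]; nlinarith
  have hsphannulus : ∀ z ∈ sphere (Λ j) r, r ≤ dist z (Λ j) ∧ dist z (Λ j) ≤ R := by
    intro z hz
    rw [mem_sphere] at hz
    exact ⟨hz.ge, by rw [hz]; exact hrR.le⟩
  have hintegrand_cont : ∀ t : ℝ, t ∈ Set.Icc (0:ℝ) 1 →
      ContinuousOn (fun z => (deriv P z + (t:ℂ) * deriv G z) / (P z + (t:ℂ) * G z))
        (sphere (Λ j) r) := by
    intro t ht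
    apply ContinuousOn.div
    · exact (hderivPcont.continuousOn).add (continuousOn_const.mul hderivGcont)
    · exact (hPdiff.continuous.continuousOn).add (continuousOn_const.mul hGcont)
    · intro z hz
      exact hann t ht z (hsphannulus z hz).1 (hsphannulus z hz).2
  have hΦlip : ∀ s ∈ Set.Icc (0:ℝ) 1, ∀ t ∈ Set.Icc (0:ℝ) 1,
      ‖Φ t - Φ s‖ ≤ 2 * π * r * (M / (ε * ε)) * |t - s| := by
    intro s hs t ht
    have hint_t := (hintegrand_cont t ht).circleIntegrable hrpos.le
    have hint_s := (hintegrand_cont s hs).circleIntegrable hrpos.le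
    rw [hΦdef]
    simp only
    rw [← circleIntegral.integral_sub hint_t hint_s]
    have hbound : ∀ z ∈ sphere (Λ j) r,
        ‖(deriv P z + (t:ℂ) * deriv G z) / (P z + (t:ℂ) * G z) -
          (deriv P z + (s:ℂ) * deriv G z) / (P z + (s:ℂ) * G z)‖ ≤ M / (ε * ε) * |t - s| := by
      intro z hz
      obtain ⟨ha1, ha2⟩ := hsphannulus z hz
      have hdt : P z + (t:ℂ) * G z ≠ 0 := hann t ht z ha1 ha2
      have hds : P z + (s:ℂ) * G z ≠ 0 := hann s hs z ha1 ha2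
      have habt : ε ≤ ‖P z + (t:ℂ) * G z‖ := hFlow t ht z ha1 ha2
      have habs : ε ≤ ‖P z + (s:ℂ) * G z‖ := hFlow s hs z ha1 ha2
      have hid : (deriv P z + (t:ℂ) * deriv G z) / (P z + (t:ℂ) * G z) -
          (deriv P z + (s:ℂ) * deriv G z) / (P z + (s:ℂ) * G z) =
          ((t:ℂ) - (s:ℂ)) * (deriv G z * P z - deriv P z * G z) /
            ((P z + (t:ℂ) * G z) * (P z + (s:ℂ) * G z)) := by
        rw [div_sub_div _ _ hdt hds]
        ring
      rw [hid, norm_div, norm_mul, norm_mul]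
      have hts : ‖(t:ℂ) - (s:ℂ)‖ = |t - s| := by
        rw [← Complex.ofReal_sub, Complex.norm_real, Real.norm_eq_abs]
      rw [hts]
      have hnum : |t - s| * ‖deriv G z * P z - deriv P z * G z‖ ≤ |t - s| * M :=
        mul_le_mul_of_nonneg_left (hM z hz) (abs_nonneg _)
      have hden : ε * ε ≤ ‖P z + (t:ℂ) * G z‖ * ‖P z + (s:ℂ) * G z‖ :=
        mul_le_mul habt habs hεpos.le (norm_nonneg _)
      have hdenpos : 0 < ‖P z + (t:ℂ) * G z‖ * ‖P z + (s:ℂ) * G z‖ := by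
        nlinarith [mul_pos hεpos hεpos]
      rw [div_le_iff₀ hdenpos]
      calc |t - s| * ‖deriv G z * P z - deriv P z * G z‖ ≤ |t - s| * M := hnum
      _ = M * |t - s| := by ring
      _ ≤ M / (ε * ε) * |t - s| * (‖P z + (t:ℂ) * G z‖ *
            ‖P z + (s:ℂ) * G z‖) := by
          rw [div_mul_eq_mul_div, div_mul_eq_mul_div, le_div_iff₀ (mul_pos hεpos hεpos)]
          have habsts : (0:ℝ) ≤ |t - s| := abs_nonneg _
          nlinarith [hden, mul_le_mul_of_nonneg_left hden (mul_nonneg hM0 habsts)]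
    have := circleIntegral.norm_integral_le_of_norm_le_const hrpos.le hbound
    calc ‖∮ z in C(Λ j, r), ((deriv P z + (t:ℂ) * deriv G z) / (P z + (t:ℂ) * G z) -
          (deriv P z + (s:ℂ) * deriv G z) / (P z + (s:ℂ) * G z))‖
        ≤ 2 * π * r * (M / (ε * ε) * |t - s|) := this
      _ = 2 * π * r * (M / (ε * ε)) * |t - s| := by ring
  -- the normalized counting function
  set q : ℝ → ℝ := fun t => (Φ t * (2 * π * Complex.I)⁻¹).re with hqdef
  have h2πI : (2 * (π:ℂ) * Complex.I) ≠ 0 := Complex.two_pi_I_ne_zero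
  have hqval : ∀ t : ℝ, ∀ m : ℕ, Φ t = 2 * π * Complex.I * (m : ℂ) → q t = m := by
    intro t m hm
    rw [hqdef]
    simp only
    rw [hm, mul_comm (2 * (π:ℂ) * Complex.I) (m:ℂ), mul_assoc,
      mul_inv_cancel₀ h2πI, mul_one]
    exact Complex.natCast_re m
  have hqnat : ∀ t ∈ Set.Icc (0:ℝ) 1, ∃ m : ℕ, q t = m := by
    intro t ht
    obtain ⟨zs, g, _, _, _, _, hΦt⟩ := hcount t ht
    exact ⟨Multiset.card zs, hqval t _ hΦt⟩
  have hqcont : ContinuousOn q (Set.Icc (0:ℝ) 1) := by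
    set K : ℝ := 2 * π * r * (M / (ε * ε)) * ‖(2 * (π:ℂ) * Complex.I)⁻¹‖ with hKdef
    have hK0 : 0 ≤ K := by
      rw [hKdef]
      have hπ : (0:ℝ) < π := Real.pi_pos
      have : (0:ℝ) ≤ M / (ε * ε) := div_nonneg hM0 (mul_nonneg hεpos.le hεpos.le)
      positivity
    apply LipschitzOnWith.continuousOn (K := Real.toNNReal K)
    apply LipschitzOnWith.of_dist_le_mul
    intro t ht s hs
    rw [Real.dist_eq, Real.dist_eq]
    have hqsub : q t - q s = ((Φ t - Φ s) * (2 * π * Complex.I)⁻¹).re := by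
      rw [hqdef]
      simp only
      rw [sub_mul, Complex.sub_re]
    rw [hqsub]
    calc |((Φ t - Φ s) * (2 * π * Complex.I)⁻¹).re|
        ≤ ‖(Φ t - Φ s) * (2 * π * Complex.I)⁻¹‖ := Complex.abs_re_le_norm _
      _ = ‖Φ t - Φ s‖ * ‖(2 * (π:ℂ) * Complex.I)⁻¹‖ := by
          rw [norm_mul]
      _ ≤ (2 * π * r * (M / (ε * ε)) * |t - s|) * ‖(2 * (π:ℂ) * Complex.I)⁻¹‖ :=
          mul_le_mul_of_nonneg_right (hΦlip s hs t ht) (norm_nonneg _)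
      _ = K * |t - s| := by rw [hKdef]; ring
      _ ≤ Real.toNNReal K * |t - s| := by
          apply mul_le_mul_of_nonneg_right _ (abs_nonneg _)
          exact (Real.coe_toNNReal K hK0).symm.le
  -- extract the data at t = 1
  have h1mem : (1:ℝ) ∈ Set.Icc (0:ℝ) 1 := ⟨zero_le_one, le_refl 1⟩
  have h0mem : (0:ℝ) ∈ Set.Icc (0:ℝ) 1 := ⟨le_refl 0, zero_le_one⟩
  obtain ⟨zs, g, hzs, hgdiff, hgne, hfact, hΦ1⟩ := hcount 1 h1mem
  have hq1 : q 1 = Multiset.card zs := hqval 1 _ hΦ1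
  have hq0 : q 0 = L.card := hqval 0 _ hΦ0
  -- the two counts agree
  have hcard : Multiset.card zs = L.card := by
    by_contra hne
    rcases Nat.lt_or_ge (Multiset.card zs) L.card with hlt | hge
    · have hmem : ((Multiset.card zs : ℝ) + 1/2) ∈ Set.Icc (q 1) (q 0) := by
        constructor
        · rw [hq1]; linarith
        · rw [hq0]
          have hcast : (Multiset.card zs : ℝ) + 1 ≤ (L.card : ℝ) := by exact_mod_cast hlt
          linarith
      obtain ⟨t, htmem, hqt⟩ := intermediate_value_Icc' zero_le_one hqcont hmem
      obtain ⟨m, hm⟩ := hqnat t htmem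
      rw [hm] at hqt
      have h2 : (2 * m : ℕ) = (2 * Multiset.card zs + 1 : ℕ) := by
        have h3 : (2 * m : ℝ) = 2 * (Multiset.card zs : ℝ) + 1 := by
          have := hqt
          push_cast at this ⊢
          linarith
        exact_mod_cast h3
      omega
    · have hlt : L.card < Multiset.card zs := lt_of_le_of_ne hge (fun h => hne h.symm)
      have hmem : ((L.card : ℝ) + 1/2) ∈ Set.Icc (q 0) (q 1) := by
        constructor
        · rw [hq0]; linarith
        · rw [hq1]
          have hcast : (L.card : ℝ) + 1 ≤ (Multiset.card zs : ℝ) := by exact_mod_cast hlt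
          linarith
      obtain ⟨t, htmem, hqt⟩ := intermediate_value_Icc zero_le_one hqcont hmem
      obtain ⟨m, hm⟩ := hqnat t htmem
      rw [hm] at hqt
      have h2 : (2 * m : ℕ) = (2 * L.card + 1 : ℕ) := by
        have h3 : (2 * m : ℝ) = 2 * (L.card : ℝ) + 1 := by
          have := hqt
          push_cast at this ⊢
          linarith
        exact_mod_cast h3
      omega
  refine ⟨zs, hcard, ?_, g, hgdiff.mono (ball_subset_ball hRR₂.le), ?_, ?_⟩
  · intro z hz
    exact (hzs z hz).1
  · intro z hz
    exact hgne z (ball_subset_closedBall hz)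
  · intro z hz
    have hzV : z ∈ ball (Λ j) R₂ := ball_subset_ball hRR₂.le hz
    have hfz := hfact z hzV
    rw [Complex.ofReal_one, one_mul] at hfz
    exact hfz
end

section
/- Let N ≥ 1 be an integer, let η > 0, ε ≥ 0, c > 0, and let λ₀ ∈ ℂ. Let A⁰ be a complex N×N matrix all of whose entries have absolute value at most η, and let Λ_1, …, Λ_N be its eigenvalues, listed with algebraic multiplicity (so that det(w·I_N − A⁰) = ∏_{j=1}^N (w − Λ_j) for all w ∈ ℂ). Let A₂ be a complex N×N matrix all of whose entries have absolute value at most ε. If z ∈ ℂ satisfies |z − λ₀| ≤ c·η and det((z − λ₀)·I_N − A⁰ − A₂) = 0, then min_{1 ≤ j ≤ N} |z − λ₀ − Λ_j| ≤ (N!·N·ε·((c+1)·η + ε)^{N−1})^{1/N}. -/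
open Finset in
lemma prod_sub_prod_abs_le {ι : Type*} [DecidableEq ι] (s : Finset ι) (f g : ι → ℂ)
    (K e : ℝ) (hK : 0 ≤ K) (he : 0 ≤ e)
    (hf : ∀ i ∈ s, ‖f i‖ ≤ K) (hg : ∀ i ∈ s, ‖g i‖ ≤ K)
    (hfg : ∀ i ∈ s, ‖f i - g i‖ ≤ e) :
    ‖∏ i ∈ s, f i - ∏ i ∈ s, g i‖ ≤ s.card * e * K ^ (s.card - 1) := by
  induction s using Finset.induction with
  | empty => simp
  | @insert a s ha ih =>
    rw [Finset.prod_insert ha, Finset.prod_insert ha]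
    have key : f a * ∏ i ∈ s, f i - g a * ∏ i ∈ s, g i
        = (f a - g a) * ∏ i ∈ s, f i + g a * (∏ i ∈ s, f i - ∏ i ∈ s, g i) := by ring
    rw [key]
    have hfa := hfg a (mem_insert_self a s)
    have hga := hg a (mem_insert_self a s)
    have hprodf : ‖∏ i ∈ s, f i‖ ≤ K ^ s.card := by
      rw [norm_prod]
      calc ∏ i ∈ s, ‖f i‖ ≤ ∏ i ∈ s, K :=
            Finset.prod_le_prod (fun i _ => norm_nonneg _)
              (fun i hi => hf i (mem_insert_of_mem hi))
        _ = K ^ s.card := by rw [Finset.prod_const]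
    have hih := ih (fun i hi => hf i (mem_insert_of_mem hi))
      (fun i hi => hg i (mem_insert_of_mem hi)) (fun i hi => hfg i (mem_insert_of_mem hi))
    calc ‖(f a - g a) * ∏ i ∈ s, f i + g a * (∏ i ∈ s, f i - ∏ i ∈ s, g i)‖
        ≤ ‖(f a - g a) * ∏ i ∈ s, f i‖
          + ‖g a * (∏ i ∈ s, f i - ∏ i ∈ s, g i)‖ := norm_add_le _ _
      _ = ‖f a - g a‖ * ‖∏ i ∈ s, f i‖
          + ‖g a‖ * ‖∏ i ∈ s, f i - ∏ i ∈ s, g i‖ := by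
            rw [norm_mul, norm_mul]
      _ ≤ e * K ^ s.card + K * (s.card * e * K ^ (s.card - 1)) := by
            gcongr
      _ ≤ (insert a s).card * e * K ^ ((insert a s).card - 1) := by
            rw [Finset.card_insert_of_notMem ha]
            rcases Nat.eq_zero_or_pos s.card with h0 | h1
            · simp [h0]
            · have hKK : K * K ^ (s.card - 1) = K ^ s.card := by
                conv_rhs => rw [← Nat.succ_pred_eq_of_pos h1]
                rw [pow_succ, Nat.pred_eq_sub_one]; ring
              have h2 : K * (↑s.card * e * K ^ (s.card - 1)) = ↑s.card * e * K ^ s.card := by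
                rw [← hKK]; ring
              rw [h2, Nat.add_sub_cancel]
              push_cast; ring_nf
              exact le_refl _

/-- Abstract matrix core of the asymptotics (2.33): if the entries of `A0` are
bounded by `η`, `Λ` lists the eigenvalues of `A0` with algebraic multiplicity,
the entries of `A2` are bounded by `ε`, and `z` satisfies `|z - z₀| ≤ c*η` and
`det((z-z₀) • I_N - A0 - A2) = 0`, then `z - z₀` is within
`(N! * N * ε * ((c+1)*η + ε)^(N-1))^(1/N)` of some `Λ j`. -/
theorem stmt_11 (N : ℕ) (hN : 1 ≤ N) (η ε c : ℝ) (hη : 0 < η) (hε : 0 ≤ ε) (hc : 0 < c)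
    (z₀ : ℂ) (A0 A2 : Matrix (Fin N) (Fin N) ℂ)
    (hA0 : ∀ i j, ‖A0 i j‖ ≤ η)
    (Λ : Fin N → ℂ)
    (hΛ : ∀ w : ℂ, (w • (1 : Matrix (Fin N) (Fin N) ℂ) - A0).det = ∏ j, (w - Λ j))
    (hA2 : ∀ i j, ‖A2 i j‖ ≤ ε)
    (z : ℂ) (hz : ‖z - z₀‖ ≤ c * η)
    (hdet : ((z - z₀) • (1 : Matrix (Fin N) (Fin N) ℂ) - A0 - A2).det = 0) :
    ∃ j : Fin N, ‖z - z₀ - Λ j‖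
      ≤ ((N.factorial : ℝ) * N * ε * ((c + 1) * η + ε) ^ (N - 1)) ^ (1 / (N : ℝ)) := by
  set K : ℝ := (c + 1) * η + ε with hKdef
  have hK0 : 0 ≤ K := by positivity
  set M : Matrix (Fin N) (Fin N) ℂ := (z - z₀) • (1 : Matrix (Fin N) (Fin N) ℂ) - A0 with hM
  set B : Matrix (Fin N) (Fin N) ℂ := M - A2 with hB
  -- entry bounds
  have hMent0 : ∀ i j, ‖M i j‖ ≤ (c + 1) * η := by
    intro i j
    have h1 : M i j = (z - z₀) * (1 : Matrix (Fin N) (Fin N) ℂ) i j - A0 i j := by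
      simp [hM, Matrix.sub_apply, Matrix.smul_apply, smul_eq_mul]
    rw [h1]
    calc ‖(z - z₀) * (1 : Matrix (Fin N) (Fin N) ℂ) i j - A0 i j‖
        ≤ ‖(z - z₀) * (1 : Matrix (Fin N) (Fin N) ℂ) i j‖
          + ‖A0 i j‖ := by
          exact norm_sub_le ((z - z₀) * (1 : Matrix (Fin N) (Fin N) ℂ) i j) (A0 i j)
      _ ≤ c * η * 1 + η := by
          gcongr ?_ + ?_
          · rw [norm_mul]
            have h2 : ‖(1 : Matrix (Fin N) (Fin N) ℂ) i j‖ ≤ 1 := by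
              by_cases h : i = j <;> simp [Matrix.one_apply, h]
            exact mul_le_mul hz h2 (norm_nonneg _) (by positivity)
          · exact hA0 i j
      _ = (c + 1) * η := by ring
  have hMent : ∀ i j, ‖M i j‖ ≤ K := fun i j =>
    (hMent0 i j).trans (by rw [hKdef]; linarith)
  have hBent : ∀ i j, ‖B i j‖ ≤ K := by
    intro i j
    have h1 : B i j = M i j - A2 i j := rfl
    rw [h1, hKdef]
    calc ‖M i j - A2 i j‖ ≤ ‖M i j‖ + ‖A2 i j‖ := by
          exact norm_sub_le (M i j) (A2 i j)
      _ ≤ (c + 1) * η + ε := add_le_add (hMent0 i j) (hA2 i j)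
  have hMBent : ∀ i j, ‖M i j - B i j‖ ≤ ε := by
    intro i j
    have h1 : M i j - B i j = A2 i j := by simp [hB, Matrix.sub_apply]
    rw [h1]; exact hA2 i j
  -- determinant difference bound
  set D : ℝ := (N.factorial : ℝ) * N * ε * K ^ (N - 1) with hDdef
  have hD0 : 0 ≤ D := by positivity
  have hdetB : B.det = 0 := by rw [hB, hM]; exact hdet
  have hdetM : M.det = ∏ j, (z - z₀ - Λ j) := by rw [hM, hΛ (z - z₀)]
  have hdiff : ‖M.det - B.det‖ ≤ D := by
    rw [Matrix.det_apply, Matrix.det_apply, ← Finset.sum_sub_distrib]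
    refine (norm_sum_le _ _).trans ?_
    have hterm : ∀ σ : Equiv.Perm (Fin N),
        ‖Equiv.Perm.sign σ • ∏ i, M (σ i) i - Equiv.Perm.sign σ • ∏ i, B (σ i) i‖
          ≤ N * ε * K ^ (N - 1) := by
      intro σ
      rw [← smul_sub]
      have hsign : ‖(Equiv.Perm.sign σ : ℤ) • (∏ i, M (σ i) i - ∏ i, B (σ i) i)‖
          = ‖∏ i, M (σ i) i - ∏ i, B (σ i) i‖ := by
        rcases Int.units_eq_one_or (Equiv.Perm.sign σ) with h | h
        · simp [h]
        · simp only [h, Units.val_neg, Units.val_one, Int.cast_neg, Int.cast_one, neg_smul,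
            one_smul, norm_neg]
      rw [show ((Equiv.Perm.sign σ : ℤˣ) • (∏ i, M (σ i) i - ∏ i, B (σ i) i))
          = ((Equiv.Perm.sign σ : ℤ) • (∏ i, M (σ i) i - ∏ i, B (σ i) i)) from rfl, hsign]
      have := prod_sub_prod_abs_le Finset.univ (fun i => M (σ i) i) (fun i => B (σ i) i)
        K ε hK0 hε (fun i _ => hMent _ _) (fun i _ => hBent _ _) (fun i _ => hMBent _ _)
      simpa using this
    calc ∑ σ : Equiv.Perm (Fin N),
          ‖Equiv.Perm.sign σ • ∏ i, M (σ i) i - Equiv.Perm.sign σ • ∏ i, B (σ i) i‖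
        ≤ ∑ _σ : Equiv.Perm (Fin N), (N : ℝ) * ε * K ^ (N - 1) :=
          Finset.sum_le_sum fun σ _ => hterm σ
      _ = (Fintype.card (Equiv.Perm (Fin N)) : ℝ) * ((N : ℝ) * ε * K ^ (N - 1)) := by
          rw [Finset.sum_const, Finset.card_univ, nsmul_eq_mul]
      _ = D := by rw [hDdef, Fintype.card_perm, Fintype.card_fin]; ring
  have hprod : ∏ j, ‖z - z₀ - Λ j‖ ≤ D := by
    have : ‖∏ j, (z - z₀ - Λ j)‖ ≤ D := by
      rw [← hdetM]
      calc ‖M.det‖ = ‖M.det - B.det‖ := by rw [hdetB, sub_zero]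
        _ ≤ D := hdiff
    rwa [norm_prod] at this
  -- pick the minimizing index
  have hne : (Finset.univ : Finset (Fin N)).Nonempty := by
    have : Nonempty (Fin N) := Fin.pos_iff_nonempty.mp hN
    exact Finset.univ_nonempty
  obtain ⟨j, -, hj⟩ := Finset.exists_min_image Finset.univ
    (fun j => ‖z - z₀ - Λ j‖) hne
  refine ⟨j, ?_⟩
  set m : ℝ := ‖z - z₀ - Λ j‖ with hm
  have hm0 : 0 ≤ m := norm_nonneg _
  have hpow : m ^ N ≤ D := by
    calc m ^ N = ∏ _k : Fin N, m := by rw [Finset.prod_const, Finset.card_univ, Fintype.card_fin]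
      _ ≤ ∏ k, ‖z - z₀ - Λ k‖ :=
          Finset.prod_le_prod (fun k _ => hm0) (fun k _ => hj k (Finset.mem_univ k))
      _ ≤ D := hprod
  have hNne : (N : ℝ) ≠ 0 := by positivity
  have : m = (m ^ N) ^ (1 / (N : ℝ)) := by
    rw [← Real.rpow_natCast m N, ← Real.rpow_mul hm0, mul_one_div_cancel hNne, Real.rpow_one]
  rw [this]
  exact Real.rpow_le_rpow (by positivity) hpow (by positivity)
end
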